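/- Under the assumption that there exist $\beta \in (0,1]$ and $\mathfrak{C} > 0$ with $|\{x \in S : |\bar{p}(x)| \le \varepsilon\}| \le \mathfrak{C}\varepsilon^{\beta}$ for all $\varepsilon > 0$, and the bang-bang characterizations of $\bar{u}$ by $\bar{p}$ and of $\bar{\mathfrak{u}}$ by $\bar{p}_\ell$ as above, one has $\|\bar{u} - \bar{\mathfrak{u}}\|_{L^1(S)} \le (b-a)\mathfrak{C}\,\|\bar{p} - \bar{p}_\ell\|_{L^\infty(\Omega)}^{\beta}$. -/

import Mathlib

/-!
Let `ε = ‖p̄ - p̄ℓ‖_∞`. Wherever `|p̄| > ε`, the functions `p̄` and `p̄ℓ` have the same sign, so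
both bang-bang laws pick the same bound and `ū = 𝔲` there. On the rest of `S`, the set
`{0 < |p̄| ≤ ε}`, the difference is at most `b - a`, and the growth condition bounds the measure
of that set by `C ε^β`.
-/

open MeasureTheory Set

theorem MeasureTheory.MemLp.ae_norm_le_toReal_eLpNorm_top {α E : Type*} [MeasurableSpace α]
    {μ : Measure α} [NormedAddCommGroup E] {f : α → E} (hf : MemLp f ⊤ μ) :
    ∀ᵐ x ∂μ, ‖f x‖ ≤ (eLpNorm f ⊤ μ).toReal := by
  have hfin := hf.eLpNorm_lt_top.ne
  rw [eLpNorm_exponent_top] at hfin ⊢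
  filter_upwards [ae_le_eLpNormEssSup (f := f) (μ := μ)] with x hx
  exact (ENNReal.ofReal_le_iff_le_toReal hfin).1 (by rwa [ofReal_norm])

theorem eq_of_bangBang_of_abs_sub_lt_abs {a b p q u v : ℝ}
    (hua : 0 < p → u = a) (hub : p < 0 → u = b)
    (hva : 0 < q → v = a) (hvb : q < 0 → v = b) (h : |p - q| < |p|) : u = v := by
  rcases lt_trichotomy p 0 with hp | rfl | hp
  · rw [abs_of_neg hp] at h
    rw [hub hp, hvb (by linarith [neg_abs_le (p - q)])]
  · exact absurd h (by simp)
  · rw [abs_of_pos hp] at h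
    rw [hua hp, hva (by linarith [le_abs_self (p - q)])]

section BangBang

variable {α : Type*} [MeasurableSpace α] {μ : Measure α}

theorem setIntegral_abs_sub_le_of_bangBang [IsFiniteMeasure μ] {a b ε : ℝ} {u v p q : α → ℝ}
    (hp : Measurable p)
    (hu : ∀ᵐ x ∂μ, a ≤ u x ∧ u x ≤ b) (hv : ∀ᵐ x ∂μ, a ≤ v x ∧ v x ≤ b)
    (hua : ∀ᵐ x ∂μ, 0 < p x → u x = a) (hub : ∀ᵐ x ∂μ, p x < 0 → u x = b)
    (hva : ∀ᵐ x ∂μ, 0 < q x → v x = a) (hvb : ∀ᵐ x ∂μ, q x < 0 → v x = b)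
    (hpq : ∀ᵐ x ∂μ, |p x - q x| ≤ ε) :
    ∫ x in {x | p x ≠ 0}, |u x - v x| ∂μ
      ≤ (b - a) * (μ {x | p x ≠ 0 ∧ |p x| ≤ ε}).toReal := by
  set S := {x | p x ≠ 0}
  set T := {x | p x ≠ 0 ∧ |p x| ≤ ε}
  have hS : MeasurableSet S := hp (measurableSet_singleton 0).compl
  have hT : MeasurableSet T := hS.inter (measurableSet_le hp.abs measurable_const)
  have hbound : ∀ᵐ x ∂μ, x ∈ S → |u x - v x| ≤ T.indicator (fun _ => b - a) x := by
    filter_upwards [hu, hv, hua, hub, hva, hvb, hpq] with x hux hvx hua hub hva hvb hpq hxS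
    by_cases hsmall : |p x| ≤ ε
    · rw [indicator_of_mem (show x ∈ T from ⟨hxS, hsmall⟩)]
      exact abs_sub_le_of_le_of_le hux.1 hux.2 hvx.1 hvx.2
    · rw [indicator_of_notMem (fun h => hsmall h.2),
        eq_of_bangBang_of_abs_sub_lt_abs hua hub hva hvb (by linarith), sub_self, abs_zero]
  calc ∫ x in S, |u x - v x| ∂μ ≤ ∫ x in S, T.indicator (fun _ => b - a) x ∂μ :=
        integral_mono_of_nonneg (ae_of_all _ fun _ => abs_nonneg _)
          ((integrable_const _).indicator hT) ((ae_restrict_iff' hS).2 hbound)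
    _ = (b - a) * (μ T).toReal := by
        rw [setIntegral_indicator hT, inter_eq_right.2 fun _ hx => hx.1, setIntegral_const,
          smul_eq_mul, measureReal_def, mul_comm]

theorem toReal_measure_abs_le_le_rpow {p : α → ℝ} {β C ε : ℝ} (hβ : 0 < β)
    (hmeas : ∀ ε : ℝ, 0 < ε → (μ {x | p x ≠ 0 ∧ |p x| ≤ ε}).toReal ≤ C * ε ^ β)
    (hε : 0 ≤ ε) : (μ {x | p x ≠ 0 ∧ |p x| ≤ ε}).toReal ≤ C * ε ^ β := by
  rcases hε.eq_or_lt with rfl | hε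
  · -- the level set `{0 < |p| ≤ 0}` is empty
    simp [Real.zero_rpow hβ.ne']
  · exact hmeas ε hε

end BangBang

theorem control_error_L1_bound_general
    {α : Type*} [MeasurableSpace α] (μ : Measure α) [IsFiniteMeasure μ]
    (a b : ℝ) (hab : a < b)
    (ubar ufrak pbar pbarl : α → ℝ)
    (hmp : Measurable pbar)
    (hu_ad : ∀ᵐ x ∂μ, a ≤ ubar x ∧ ubar x ≤ b)
    (hv_ad : ∀ᵐ x ∂μ, a ≤ ufrak x ∧ ufrak x ≤ b)
    (hua : ∀ᵐ x ∂μ, 0 < pbar x → ubar x = a)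
    (hub : ∀ᵐ x ∂μ, pbar x < 0 → ubar x = b)
    (hva : ∀ᵐ x ∂μ, 0 < pbarl x → ufrak x = a)
    (hvb : ∀ᵐ x ∂μ, pbarl x < 0 → ufrak x = b)
    (β C : ℝ) (hβ0 : 0 < β)
    (hmeas : ∀ ε : ℝ, 0 < ε →
      (μ {x | pbar x ≠ 0 ∧ |pbar x| ≤ ε}).toReal ≤ C * ε ^ β)
    (hpinf : MemLp (fun x => pbar x - pbarl x) ⊤ μ) :
    ∫ x in {x | pbar x ≠ 0}, |ubar x - ufrak x| ∂μ
      ≤ (b - a) * C *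
        ((eLpNorm (fun x => pbar x - pbarl x) ⊤ μ).toReal) ^ β := by
  set ε := (eLpNorm (fun x => pbar x - pbarl x) ⊤ μ).toReal
  have hpq : ∀ᵐ x ∂μ, |pbar x - pbarl x| ≤ ε := hpinf.ae_norm_le_toReal_eLpNorm_top
  calc ∫ x in {x | pbar x ≠ 0}, |ubar x - ufrak x| ∂μ
      ≤ (b - a) * (μ {x | pbar x ≠ 0 ∧ |pbar x| ≤ ε}).toReal :=
        setIntegral_abs_sub_le_of_bangBang hmp hu_ad hv_ad hua hub hva hvb hpq
    _ ≤ (b - a) * (C * ε ^ β) :=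
        mul_le_mul_of_nonneg_left (toReal_measure_abs_le_le_rpow hβ0 hmeas ENNReal.toReal_nonneg)
          (sub_nonneg.2 hab.le)
    _ = (b - a) * C * ε ^ β := (mul_assoc _ _ _).symm

/-- Under the level-set measure assumption, the bang-bang laws for `ū`
(w.r.t. `p̄`) and `𝔲` (w.r.t. `p̄ℓ`) imply
`‖ū - 𝔲‖_{L¹(S)} ≤ (b-a) 𝔠 ‖p̄ - p̄ℓ‖_{L^∞}^β`. -/
theorem control_error_L1_bound
    {α : Type*} [MeasurableSpace α] (μ : Measure α) [IsFiniteMeasure μ]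
    (a b : ℝ) (hab : a < b)
    (ubar ufrak pbar pbarl : α → ℝ)
    (hmu : Measurable ubar) (hmv : Measurable ufrak)
    (hmp : Measurable pbar) (hmpl : Measurable pbarl)
    (hu_ad : ∀ᵐ x ∂μ, a ≤ ubar x ∧ ubar x ≤ b)
    (hv_ad : ∀ᵐ x ∂μ, a ≤ ufrak x ∧ ufrak x ≤ b)
    (hua : ∀ᵐ x ∂μ, 0 < pbar x → ubar x = a)
    (hub : ∀ᵐ x ∂μ, pbar x < 0 → ubar x = b)
    (hva : ∀ᵐ x ∂μ, 0 < pbarl x → ufrak x = a)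
    (hvb : ∀ᵐ x ∂μ, pbarl x < 0 → ufrak x = b)
    (β C : ℝ) (hβ0 : 0 < β) (hβ1 : β ≤ 1) (hC : 0 < C)
    (hmeas : ∀ ε : ℝ, 0 < ε →
      (μ {x | pbar x ≠ 0 ∧ |pbar x| ≤ ε}).toReal ≤ C * ε ^ β)
    (hpinf : MemLp (fun x => pbar x - pbarl x) ⊤ μ) :
    ∫ x in {x | pbar x ≠ 0}, |ubar x - ufrak x| ∂μ
      ≤ (b - a) * C *
        ((eLpNorm (fun x => pbar x - pbarl x) ⊤ μ).toReal) ^ β :=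
  control_error_L1_bound_general μ a b hab ubar ufrak pbar pbarl hmp hu_ad hv_ad hua hub hva hvb β C
    hβ0 hmeas hpinf
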